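/- Let m_1 = m_3 > 0, m_2 = m_4 > 0, r_1, r_2 > 0, ω ≠ 0 and α_0 ∈ ℝ. Define the rhomboidal circular motion q_k(t) = ρ_k (cos(ωt + (k−1)π/2 + α_0), sin(ωt + (k−1)π/2 + α_0)) for k = 1, 2, 3, 4, where ρ_1 = ρ_3 = r_1 and ρ_2 = ρ_4 = r_2. Then q = (q_1, q_2, q_3, q_4) is a solution of Newton's equations of the planar four-body problem for all t ∈ ℝ if and only if ω² = 2m_2/(r_1² + r_2²)^{3/2} + m_1/(4r_1³) and ω² = 2m_1/(r_1² + r_2²)^{3/2} + m_2/(4r_2³). -/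

import Mathlib

/-!
At time `t` the bodies sit at the vertices `r₁ u, r₂ v, -r₁ u, -r₂ v` of a rhombus, where `(u, v)`
is the standard orthonormal frame rotated through `ωt + α₀`. Each body moves uniformly on a circle,
so its acceleration is `-ω²` times its position. In the frame `(u, v)` one computes that the
gravitational force on the body at `r₁ u` is `-m₁ (2m₂/(r₁²+r₂²)^{3/2} + m₁/(4r₁³)) r₁ u`, and a
quarter turn of the rhombus, which shifts the bodies cyclically and swaps `(r₁, m₁)` with
`(r₂, m₂)`, gives the forces on the others. Both sides of Newton's equations are thus multiples of
the (nonzero) position, and the equations reduce to the two conditions on `ω²`.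
-/

open Real

noncomputable section

/-- A point of the Euclidean plane from its two coordinates. -/
def pt (x y : ℝ) : EuclideanSpace ℝ (Fin 2) :=
  (WithLp.equiv 2 (Fin 2 → ℝ)).symm ![x, y]

/-- `q` is a solution of Newton's equations of the planar four-body problem with masses `m`
on the set `I`. -/
def IsNewtonSolution (m : Fin 4 → ℝ) (I : Set ℝ)
    (q : Fin 4 → ℝ → EuclideanSpace ℝ (Fin 2)) : Prop :=
  (∀ t ∈ I, ∀ i j : Fin 4, i ≠ j → q i t ≠ q j t) ∧
    ∀ i : Fin 4, ∀ t ∈ I, DifferentiableAt ℝ (q i) t ∧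
      ∃ a : EuclideanSpace ℝ (Fin 2), HasDerivAt (deriv (q i)) a t ∧
        m i • a = ∑ j ∈ Finset.univ.erase i,
          ((m i * m j) / ‖q j t - q i t‖ ^ 3) • (q j t - q i t)

/-- The rhomboidal circular motion `q_k(t) = ρ_k (cos(ωt + (k-1)π/2 + α₀),
sin(ωt + (k-1)π/2 + α₀))` with `ρ₁ = ρ₃ = r₁`, `ρ₂ = ρ₄ = r₂`. -/
def rhomboidalMotion (r₁ r₂ ω α₀ : ℝ) : Fin 4 → ℝ → EuclideanSpace ℝ (Fin 2) :=
  fun k t =>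
    pt (![r₁, r₂, r₁, r₂] k * Real.cos (ω * t + (k : ℕ) * (π / 2) + α₀))
       (![r₁, r₂, r₁, r₂] k * Real.sin (ω * t + (k : ℕ) * (π / 2) + α₀))

open Finset RealInnerProductSpace

lemma pow_three_eq_sq_rpow {x : ℝ} (hx : 0 ≤ x) : x ^ 3 = (x ^ 2) ^ ((3 : ℝ) / 2) := by
  rw [← Real.rpow_natCast x 2, ← Real.rpow_mul hx]
  norm_num

section NewtonForce

variable {ι κ E : Type*} [Fintype ι] [DecidableEq ι] [Fintype κ] [DecidableEq κ]
  [NormedAddCommGroup E] [NormedSpace ℝ E]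

def newtonForce (m : ι → ℝ) (x : ι → E) (i : ι) : E :=
  ∑ j ∈ univ.erase i, ((m i * m j) / ‖x j - x i‖ ^ 3) • (x j - x i)

lemma newtonForce_eq_sum_univ (m : ι → ℝ) (x : ι → E) (i : ι) :
    newtonForce m x i = ∑ j, ((m i * m j) / ‖x j - x i‖ ^ 3) • (x j - x i) :=
  sum_erase _ (by simp)

lemma newtonForce_comp_equiv (m : ι → ℝ) (x : ι → E) (σ : κ ≃ ι) (i : κ) :
    newtonForce (m ∘ σ) (x ∘ σ) i = newtonForce m x (σ i) := by
  simp only [newtonForce_eq_sum_univ, Function.comp_apply]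
  exact σ.sum_comp fun j => ((m (σ i) * m j) / ‖x j - x (σ i)‖ ^ 3) • (x j - x (σ i))

lemma newtonForce_comp_addRight {n : ℕ} [NeZero n] (m : Fin n → ℝ) (x : Fin n → E)
    (i k : Fin n) :
    newtonForce (fun j => m (j + k)) (fun j => x (j + k)) i = newtonForce m x (i + k) :=
  newtonForce_comp_equiv m x (Equiv.addRight k) i

end NewtonForce

lemma vecCons_alternating_add_one {α : Type*} (p q : α) (j : Fin 4) :
    (![p, q, p, q] : Fin 4 → α) (j + 1) = ![q, p, q, p] j := by
  fin_cases j <;> rfl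

lemma vecCons_alternating_succ {α : Type*} (p q : α) (j : Fin 3) :
    (![p, q, p, q] : Fin 4 → α) j.succ = ![q, p, q, p] j.castSucc := by
  fin_cases j <;> rfl

lemma smul_neg_sq_smul_eq_neg_mul_smul_iff {E : Type*} [AddCommGroup E] [Module ℝ E]
    [NoZeroSMulDivisors ℝ E] {M Λ ω : ℝ} {x : E} (hM : M ≠ 0) (hx : x ≠ 0) :
    M • (-ω ^ 2) • x = -(M * Λ) • x ↔ ω ^ 2 = Λ := by
  rw [smul_smul, (smul_left_injective ℝ hx).eq_iff, mul_neg, neg_inj, mul_right_inj' hM]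

section Rhombus

variable {E : Type*} [NormedAddCommGroup E] [InnerProductSpace ℝ E]

def rhombus (a b : ℝ) (u v : E) : Fin 4 → E := ![a • u, b • v, -(a • u), -(b • v)]

def rhombusFreq (M N a b : ℝ) : ℝ := 2 * N / (a ^ 2 + b ^ 2) ^ ((3 : ℝ) / 2) + M / (4 * a ^ 3)

lemma norm_smul_sub_smul_pow_three {u v : E} (hu : ‖u‖ = 1) (hv : ‖v‖ = 1) (huv : ⟪u, v⟫ = 0)
    (a b : ℝ) : ‖b • v - a • u‖ ^ 3 = (a ^ 2 + b ^ 2) ^ ((3 : ℝ) / 2) := by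
  rw [pow_three_eq_sq_rpow (norm_nonneg _), norm_sub_sq_real, real_inner_smul_left,
    real_inner_smul_right, real_inner_comm, huv, norm_smul, norm_smul, hu, hv]
  simp only [Real.norm_eq_abs, mul_one, sq_abs, mul_zero, sub_zero]
  ring_nf

lemma newtonForce_rhombus_zero {u v : E} (hu : ‖u‖ = 1) (hv : ‖v‖ = 1) (huv : ⟪u, v⟫ = 0)
    {a : ℝ} (ha : 0 ≤ a) (b M N : ℝ) :
    newtonForce ![M, N, M, N] (rhombus a b u v) 0 = -(M * rhombusFreq M N a b) • (a • u) := by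
  have hopp : ‖-(a • u) - a • u‖ ^ 3 = 8 * a ^ 3 := by
    rw [← neg_add', norm_neg, ← two_smul ℝ, smul_smul, norm_smul, hu,
      Real.norm_of_nonneg (by positivity)]
    ring
  have hdiag : ‖-(b • v) - a • u‖ ^ 3 = (a ^ 2 + b ^ 2) ^ ((3 : ℝ) / 2) := by
    rw [← neg_smul, norm_smul_sub_smul_pow_three hu hv huv, neg_sq]
  rw [newtonForce_eq_sum_univ, Fin.sum_univ_four]
  simp only [rhombus, rhombusFreq, Matrix.cons_val_zero, Matrix.cons_val_one, Matrix.cons_val_two,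
    Matrix.cons_val_three, Matrix.head_cons, Matrix.tail_cons, sub_self, smul_zero, zero_add,
    norm_smul_sub_smul_pow_three hu hv huv, hopp, hdiag]
  module

lemma rhombus_add_one (a b : ℝ) (u v : E) (j : Fin 4) :
    rhombus a b u v (j + 1) = rhombus b a v (-u) j := by
  fin_cases j <;> simp [rhombus]

lemma newtonForce_rhombus {u v : E} (hu : ‖u‖ = 1) (hv : ‖v‖ = 1) (huv : ⟪u, v⟫ = 0)
    {a b : ℝ} (ha : 0 ≤ a) (hb : 0 ≤ b) (M N : ℝ) (k : Fin 4) :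
    newtonForce ![M, N, M, N] (rhombus a b u v) k =
      -(![M, N, M, N] k * ![rhombusFreq M N a b, rhombusFreq N M b a, rhombusFreq M N a b,
        rhombusFreq N M b a] k) • rhombus a b u v k := by
  induction k using Fin.induction generalizing u v a b M N with
  | zero => exact newtonForce_rhombus_zero hu hv huv ha b M N
  | succ k ih =>
    have hvu : ⟪v, -u⟫ = 0 := by rw [inner_neg_right, real_inner_comm, huv, neg_zero]
    rw [vecCons_alternating_succ, vecCons_alternating_succ, ← Fin.coeSucc_eq_succ,
      rhombus_add_one, ← newtonForce_comp_addRight]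
    simp only [vecCons_alternating_add_one, rhombus_add_one]
    exact ih hv (by rwa [norm_neg]) hvu hb ha N M

lemma inner_rhombus_coords {u v : E} (hu : ‖u‖ = 1) (hv : ‖v‖ = 1) (huv : ⟪u, v⟫ = 0)
    (a b : ℝ) (k : Fin 4) :
    ⟪rhombus a b u v k, u⟫ = ![a, 0, -a, 0] k ∧ ⟪rhombus a b u v k, v⟫ = ![0, b, 0, -b] k := by
  have hvu : ⟪v, u⟫ = 0 := by rw [real_inner_comm, huv]
  fin_cases k <;> simp [rhombus, real_inner_smul_left, inner_neg_left, hu, hv, huv, hvu]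

lemma rhombus_injective {u v : E} (hu : ‖u‖ = 1) (hv : ‖v‖ = 1) (huv : ⟪u, v⟫ = 0)
    {a b : ℝ} (ha : a ≠ 0) (hb : b ≠ 0) : Function.Injective (rhombus a b u v) := by
  intro i j hij
  have hi := inner_rhombus_coords hu hv huv a b i
  rw [hij, (inner_rhombus_coords hu hv huv a b j).1, (inner_rhombus_coords hu hv huv a b j).2] at hi
  fin_cases i <;> fin_cases j <;> simp [ha, hb, neg_eq_self, self_eq_neg] at hi ⊢

lemma rhombus_ne_zero {u v : E} (hu : ‖u‖ = 1) (hv : ‖v‖ = 1) (huv : ⟪u, v⟫ = 0)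
    {a b : ℝ} (ha : a ≠ 0) (hb : b ≠ 0) (k : Fin 4) : rhombus a b u v k ≠ 0 := by
  intro h0
  have hk := inner_rhombus_coords hu hv huv a b k
  rw [h0, inner_zero_left, inner_zero_left] at hk
  fin_cases k <;> simp [ha, hb, ha.symm, hb.symm] at hk

end Rhombus

lemma pt_smul (r x y : ℝ) : r • pt x y = pt (r * x) (r * y) := by
  ext i; fin_cases i <;> simp [pt]

lemma norm_pt (x y : ℝ) : ‖pt x y‖ = √(x ^ 2 + y ^ 2) := by
  simp [pt, EuclideanSpace.norm_eq, Fin.sum_univ_two]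

lemma inner_pt (x y x' y' : ℝ) : ⟪pt x y, pt x' y'⟫ = x * x' + y * y' := by
  simp [pt, PiLp.inner_apply, Fin.sum_univ_two, mul_comm]

lemma hasDerivAt_pt {f g : ℝ → ℝ} {f' g' t : ℝ} (hf : HasDerivAt f f' t) (hg : HasDerivAt g g' t) :
    HasDerivAt (fun s => pt (f s) (g s)) (pt f' g') t := by
  have h : HasDerivAt (fun s => (![f s, g s] : Fin 2 → ℝ)) ![f', g'] t := by
    rw [hasDerivAt_pi]
    intro i; fin_cases i <;> simpa
  exact (EuclideanSpace.equiv (Fin 2) ℝ).symm.toContinuousLinearMap.hasFDerivAt.comp_hasDerivAt t h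

def polarPt (ρ θ : ℝ) : EuclideanSpace ℝ (Fin 2) := pt (ρ * cos θ) (ρ * sin θ)

lemma polarPt_eq_smul (ρ θ : ℝ) : polarPt ρ θ = ρ • polarPt 1 θ := by
  simp [polarPt, pt_smul]

lemma polarPt_add_pi (ρ θ : ℝ) : polarPt ρ (θ + π) = -polarPt ρ θ := by
  ext i; fin_cases i <;> simp [polarPt, pt]

lemma norm_polarPt_one (θ : ℝ) : ‖polarPt 1 θ‖ = 1 := by
  simp [polarPt, norm_pt]

lemma inner_polarPt_one_add_pi_div_two (θ : ℝ) : ⟪polarPt 1 θ, polarPt 1 (θ + π / 2)⟫ = 0 := by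
  rw [polarPt, polarPt, inner_pt, cos_add_pi_div_two, sin_add_pi_div_two]
  ring

lemma hasDerivAt_polarPt_affine (ρ ω φ t : ℝ) :
    HasDerivAt (fun s => polarPt ρ (ω * s + φ)) (ω • polarPt ρ (ω * t + φ + π / 2)) t := by
  have hθ : HasDerivAt (fun s => ω * s + φ) ω t := by
    simpa using ((hasDerivAt_id t).const_mul ω).add_const φ
  refine (hasDerivAt_pt (hθ.cos.const_mul ρ) (hθ.sin.const_mul ρ)).congr_deriv ?_
  rw [polarPt, cos_add_pi_div_two, sin_add_pi_div_two, pt_smul]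
  congr 1 <;> ring

lemma hasDerivAt_deriv_polarPt_affine (ρ ω φ t : ℝ) :
    HasDerivAt (deriv fun s => polarPt ρ (ω * s + φ)) ((-ω ^ 2) • polarPt ρ (ω * t + φ)) t := by
  have hderiv : (deriv fun s => polarPt ρ (ω * s + φ)) =
      fun s => ω • polarPt ρ (ω * s + (φ + π / 2)) :=
    funext fun s => by rw [(hasDerivAt_polarPt_affine ρ ω φ s).deriv, add_assoc]
  rw [hderiv]
  refine ((hasDerivAt_polarPt_affine ρ ω (φ + π / 2) t).const_smul ω).congr_deriv ?_
  rw [smul_smul, add_assoc, add_assoc, add_halves, ← add_assoc, polarPt_add_pi, smul_neg, neg_smul]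
  ring_nf

section RhomboidalMotion

variable {r₁ r₂ : ℝ} (ω α₀ : ℝ)

lemma rhomboidalMotion_eq_polarPt (k : Fin 4) :
    rhomboidalMotion r₁ r₂ ω α₀ k =
      fun t => polarPt (![r₁, r₂, r₁, r₂] k) (ω * t + ((k : ℕ) * (π / 2) + α₀)) := by
  funext t
  simp only [rhomboidalMotion, polarPt, add_assoc]

lemma rhomboidalMotion_eq_rhombus (k : Fin 4) (t : ℝ) :
    rhomboidalMotion r₁ r₂ ω α₀ k t =
      rhombus r₁ r₂ (polarPt 1 (ω * t + α₀)) (polarPt 1 (ω * t + α₀ + π / 2)) k := by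
  simp only [rhomboidalMotion_eq_polarPt]
  rw [polarPt_eq_smul (![r₁, r₂, r₁, r₂] k),
    show ω * t + ((k : ℕ) * (π / 2) + α₀) = ω * t + α₀ + (k : ℕ) * (π / 2) by ring]
  fin_cases k
  · simp [rhombus]
  · simp [rhombus]
  · simp [rhombus, show (2 : ℝ) * (π / 2) = π by ring, polarPt_add_pi]
  · simp [rhombus, show ω * t + α₀ + 3 * (π / 2) = ω * t + α₀ + π / 2 + π by ring, polarPt_add_pi]

lemma differentiable_rhomboidalMotion (k : Fin 4) :
    Differentiable ℝ (rhomboidalMotion r₁ r₂ ω α₀ k) := by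
  rw [rhomboidalMotion_eq_polarPt]
  exact fun t => (hasDerivAt_polarPt_affine _ ω _ t).differentiableAt

lemma hasDerivAt_deriv_rhomboidalMotion (k : Fin 4) (t : ℝ) :
    HasDerivAt (deriv (rhomboidalMotion r₁ r₂ ω α₀ k))
      ((-ω ^ 2) • rhomboidalMotion r₁ r₂ ω α₀ k t) t := by
  rw [rhomboidalMotion_eq_polarPt]
  exact hasDerivAt_deriv_polarPt_affine _ ω _ t

lemma newtonForce_rhomboidalMotion (hr₁ : 0 ≤ r₁) (hr₂ : 0 ≤ r₂) (M N t : ℝ) (k : Fin 4) :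
    newtonForce ![M, N, M, N] (fun j => rhomboidalMotion r₁ r₂ ω α₀ j t) k =
      -(![M, N, M, N] k * ![rhombusFreq M N r₁ r₂, rhombusFreq N M r₂ r₁, rhombusFreq M N r₁ r₂,
        rhombusFreq N M r₂ r₁] k) • rhomboidalMotion r₁ r₂ ω α₀ k t := by
  simp only [rhomboidalMotion_eq_rhombus]
  exact newtonForce_rhombus (norm_polarPt_one _) (norm_polarPt_one _)
    (inner_polarPt_one_add_pi_div_two _) hr₁ hr₂ M N k

lemma rhomboidalMotion_ne_zero (hr₁ : r₁ ≠ 0) (hr₂ : r₂ ≠ 0) (k : Fin 4) (t : ℝ) :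
    rhomboidalMotion r₁ r₂ ω α₀ k t ≠ 0 := by
  rw [rhomboidalMotion_eq_rhombus]
  exact rhombus_ne_zero (norm_polarPt_one _) (norm_polarPt_one _)
    (inner_polarPt_one_add_pi_div_two _) hr₁ hr₂ k

lemma rhomboidalMotion_injective (hr₁ : r₁ ≠ 0) (hr₂ : r₂ ≠ 0) (t : ℝ) :
    Function.Injective fun k => rhomboidalMotion r₁ r₂ ω α₀ k t := by
  simp only [rhomboidalMotion_eq_rhombus]
  exact rhombus_injective (norm_polarPt_one _) (norm_polarPt_one _)
    (inner_polarPt_one_add_pi_div_two _) hr₁ hr₂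

end RhomboidalMotion

lemma isNewtonSolution_iff_of_hasDerivAt {m : Fin 4 → ℝ} {I : Set ℝ}
    {q : Fin 4 → ℝ → EuclideanSpace ℝ (Fin 2)} (acc : Fin 4 → ℝ → EuclideanSpace ℝ (Fin 2))
    (hq : ∀ i, ∀ t ∈ I, DifferentiableAt ℝ (q i) t)
    (hacc : ∀ i, ∀ t ∈ I, HasDerivAt (deriv (q i)) (acc i t) t) :
    IsNewtonSolution m I q ↔ (∀ t ∈ I, ∀ i j, i ≠ j → q i t ≠ q j t) ∧
      ∀ i, ∀ t ∈ I, m i • acc i t = newtonForce m (fun j => q j t) i := by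
  refine and_congr_right fun _ => forall_congr' fun i => forall₂_congr fun t ht => ?_
  rw [and_iff_right (hq i t ht)]
  exact ⟨fun ⟨a, ha, h⟩ => ha.unique (hacc i t ht) ▸ h, fun h => ⟨_, hacc i t ht, h⟩⟩

theorem rhomboidal_isSolution_iff_general (m₁ m₂ m₃ m₄ : ℝ)
    (h13 : m₁ = m₃) (h24 : m₂ = m₄) (hm₁ : 0 < m₁) (hm₂ : 0 < m₂)
    (r₁ r₂ : ℝ) (hr₁ : 0 < r₁) (hr₂ : 0 < r₂) (ω : ℝ) (α₀ : ℝ) :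
    IsNewtonSolution ![m₁, m₂, m₃, m₄] Set.univ (rhomboidalMotion r₁ r₂ ω α₀) ↔
      (ω ^ 2 = 2 * m₂ / (r₁ ^ 2 + r₂ ^ 2) ^ ((3 : ℝ) / 2) + m₁ / (4 * r₁ ^ 3) ∧
        ω ^ 2 = 2 * m₁ / (r₁ ^ 2 + r₂ ^ 2) ^ ((3 : ℝ) / 2) + m₂ / (4 * r₂ ^ 3)) := by
  subst h13 h24
  have hm : ∀ k, ![m₁, m₂, m₁, m₂] k ≠ 0 := by
    intro k; fin_cases k <;> simp [hm₁.ne', hm₂.ne']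
  rw [isNewtonSolution_iff_of_hasDerivAt _
    (fun k t _ => (differentiable_rhomboidalMotion ω α₀ k).differentiableAt)
    (fun k t _ => hasDerivAt_deriv_rhomboidalMotion ω α₀ k t),
    and_iff_right fun t _ _ _ => (rhomboidalMotion_injective ω α₀ hr₁.ne' hr₂.ne' t).ne]
  simp only [newtonForce_rhomboidalMotion ω α₀ hr₁.le hr₂.le, Set.mem_univ, forall_const,
    smul_neg_sq_smul_eq_neg_mul_smul_iff (hm _) (rhomboidalMotion_ne_zero ω α₀ hr₁.ne' hr₂.ne' _ _),
    Fin.forall_fin_succ, IsEmpty.forall_iff, Matrix.cons_val_succ, Matrix.cons_val_zero, and_true]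
  rw [rhombusFreq, rhombusFreq, add_comm (r₂ ^ 2)]
  tauto

/-- The rhomboidal circular motion is a solution of Newton's equations of the planar
four-body problem (for all time) if and only if the two rhomboidal central configuration
equations hold. -/
theorem rhomboidal_isSolution_iff (m₁ m₂ m₃ m₄ : ℝ)
    (h13 : m₁ = m₃) (h24 : m₂ = m₄) (hm₁ : 0 < m₁) (hm₂ : 0 < m₂)
    (r₁ r₂ : ℝ) (hr₁ : 0 < r₁) (hr₂ : 0 < r₂) (ω : ℝ) (hω : ω ≠ 0) (α₀ : ℝ) :
    IsNewtonSolution ![m₁, m₂, m₃, m₄] Set.univ (rhomboidalMotion r₁ r₂ ω α₀) ↔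
      (ω ^ 2 = 2 * m₂ / (r₁ ^ 2 + r₂ ^ 2) ^ ((3 : ℝ) / 2) + m₁ / (4 * r₁ ^ 3) ∧
        ω ^ 2 = 2 * m₁ / (r₁ ^ 2 + r₂ ^ 2) ^ ((3 : ℝ) / 2) + m₂ / (4 * r₂ ^ 3)) :=
  rhomboidal_isSolution_iff_general m₁ m₂ m₃ m₄ h13 h24 hm₁ hm₂ r₁ r₂ hr₁ hr₂ ω α₀

end
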